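/- arXiv:0705.0984 — 4 statements merged into one kernel-verified Lean document; each statement's English description precedes it below -/
import Mathlib

section
/- The raising and lowering operators on the graded graph of weakly decreasing integer vectors commute. Precisely: for any two vectors μ, λ in W̄_d = {(λ_1,...,λ_d) ∈ ℤ^d : λ_1 ≥ ... ≥ λ_d}, the number of two-step walks μ → μ+e_i → μ+e_i−e_j = λ with all intermediate vectors in W̄_d (where e_i are standard basis vectors) equals the number of two-step walks μ → μ−e_j → μ−e_j+e_i = λ with intermediates in W̄_d. -/
/-!
If `λ ≠ μ`, a walk between them forces `λ = μ + eᵢ - eⱼ` with `i ≠ j`; then `μ + eᵢ = μ ⊔ λ` and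
`μ - eⱼ = μ ⊓ λ`, which are weakly decreasing whenever `μ` and `λ` are, so in both directions
the walks are exactly the pairs `(i, j)` with `λ = μ + eᵢ - eⱼ`. If `λ = μ`, the walks are the
diagonal pairs `(i, i)` with `μ ± eᵢ` weakly decreasing. Adding `eᵢ` keeps `μ` weakly decreasing
exactly when `i` is the first index of a run of equal entries, subtracting `eᵢ` exactly when it is
the last one, so both counts equal the number of distinct entries of `μ`.
-/

open Finset

section Occurrence

variable {ι α : Type*} [LinearOrder ι] [Fintype ι] [DecidableEq α]

theorem card_filter_first_occurrence_eq_card_image (f : ι → α) :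
    #{i | ∀ k < i, f k ≠ f i} = #(univ.image f) := by
  refine card_bij (fun i _ => f i) (fun i _ => mem_image_of_mem f (mem_univ i)) ?_ ?_
  · intro i hi i' hi' h
    simp only [mem_filter, mem_univ, true_and] at hi hi'
    rcases lt_trichotomy i i' with hlt | heq | hgt
    · exact absurd h (hi' i hlt)
    · exact heq
    · exact absurd h.symm (hi i' hgt)
  · intro v hv
    obtain ⟨x, -, rfl⟩ := mem_image.1 hv
    have hne : ({k | f k = f x} : Finset ι).Nonempty := ⟨x, by simp⟩
    have hmin := (mem_filter.1 (min'_mem _ hne)).2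
    refine ⟨_, ?_, hmin⟩
    simp only [mem_filter, mem_univ, true_and]
    intro k hk hfk
    exact (min'_le _ k (by simp [hfk, hmin])).not_gt hk

theorem card_filter_last_occurrence_eq_card_image (f : ι → α) :
    #{i | ∀ k, i < k → f k ≠ f i} = #(univ.image f) :=
  card_filter_first_occurrence_eq_card_image (ι := ιᵒᵈ) f

end Occurrence

theorem card_filter_eq_of_iff_and_fst_eq_snd {ι : Type*} [Fintype ι] {P : ι → Prop}
    {Q : ι × ι → Prop} {_ : DecidablePred P} {_ : DecidablePred Q}
    (hQ : ∀ p, Q p ↔ P p.1 ∧ p.1 = p.2) : #{p | Q p} = #{i | P i} := by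
  rw [← diag_card {i | P i}]
  congr 1
  ext p
  simp [mem_diag, hQ]

section SingleStep

variable {ι : Type*} [DecidableEq ι]

theorem add_single_sub_single_eq_self_iff {α : Type*} [AddCommGroup α] (f : ι → α) {a : α}
    (ha : a ≠ 0) (i j : ι) : f + Pi.single i a - Pi.single j a = f ↔ i = j := by
  refine ⟨fun h => by_contra fun hij => ha ?_, fun h => by simp [h]⟩
  simpa [hij] using congrFun h i

theorem sub_single_add_single_eq_self_iff {α : Type*} [AddCommGroup α] (f : ι → α) {a : α}
    (ha : a ≠ 0) (i j : ι) : f - Pi.single j a + Pi.single i a = f ↔ j = i := by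
  rw [sub_add_eq_add_sub, add_single_sub_single_eq_self_iff f ha, eq_comm]

theorem ne_of_add_single_sub_single_eq {μ lam : ι → ℤ} {i j : ι} (hne : lam ≠ μ)
    (h : μ + Pi.single i 1 - Pi.single j 1 = lam) : i ≠ j :=
  fun hij => hne (h ▸ (add_single_sub_single_eq_self_iff μ one_ne_zero i j).2 hij)

section Lattice

variable {α : Type*} [AddCommGroup α] [LinearOrder α] [IsOrderedAddMonoid α]

theorem add_single_eq_sup (f : ι → α) {i j : ι} (hij : i ≠ j) {a : α} (ha : 0 ≤ a) :
    f + Pi.single i a = f ⊔ (f + Pi.single i a - Pi.single j a) := by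
  ext k
  by_cases hki : k = i
  · subst hki; simp [hij, ha]
  · by_cases hkj : k = j
    · subst hkj; simp [hki, ha]
    · simp [hki, hkj]

theorem sub_single_eq_inf (f : ι → α) {i j : ι} (hij : i ≠ j) {a : α} (ha : 0 ≤ a) :
    f - Pi.single j a = f ⊓ (f + Pi.single i a - Pi.single j a) := by
  ext k
  by_cases hki : k = i
  · subst hki; simp [hij, ha]
  · by_cases hkj : k = j
    · subst hkj; simp [hki, ha]
    · simp [hki, hkj]

end Lattice

section Antitone

variable [Preorder ι] {μ lam : ι → ℤ} {i j : ι}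

theorem antitone_add_single_of_add_single_sub_single_eq (hμ : Antitone μ) (hlam : Antitone lam)
    (hne : lam ≠ μ) (h : μ + Pi.single i 1 - Pi.single j 1 = lam) :
    Antitone (μ + Pi.single i 1) := by
  rw [add_single_eq_sup μ (ne_of_add_single_sub_single_eq hne h) zero_le_one, h]
  exact hμ.sup hlam

theorem antitone_sub_single_of_add_single_sub_single_eq (hμ : Antitone μ) (hlam : Antitone lam)
    (hne : lam ≠ μ) (h : μ + Pi.single i 1 - Pi.single j 1 = lam) :
    Antitone (μ - Pi.single j 1) := by
  rw [sub_single_eq_inf μ (ne_of_add_single_sub_single_eq hne h) zero_le_one, h]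
  exact hμ.inf hlam

end Antitone

section Addable

variable [PartialOrder ι] {μ : ι → ℤ}

theorem antitone_add_single_iff (hμ : Antitone μ) (i : ι) :
    Antitone (μ + Pi.single i 1) ↔ ∀ k < i, μ k ≠ μ i := by
  constructor
  · intro h k hk
    have := h hk.le
    simp [hk.ne] at this
    omega
  · intro h a b hab
    have := hμ hab
    simp only [Pi.add_apply, Pi.single_apply]
    split_ifs with hb ha ha <;> subst_vars
    · rfl
    · have := h a (lt_of_le_of_ne hab ha); omega
    · omega
    · omega

theorem antitone_sub_single_iff (hμ : Antitone μ) (j : ι) :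
    Antitone (μ - Pi.single j 1) ↔ ∀ k, j < k → μ k ≠ μ j := by
  constructor
  · intro h k hk
    have := h hk.le
    simp [hk.ne'] at this
    omega
  · intro h a b hab
    have := hμ hab
    simp only [Pi.sub_apply, Pi.single_apply]
    split_ifs with hb ha ha <;> subst_vars
    · rfl
    · omega
    · have := h b (lt_of_le_of_ne hab (Ne.symm hb)); omega
    · omega

end Addable

theorem card_addable_eq_card_removable [LinearOrder ι] [Fintype ι] {μ : ι → ℤ}
    (hμ : Antitone μ) :
    #{i | Antitone (μ + Pi.single i 1)} = #{j | Antitone (μ - Pi.single j 1)} := by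
  simp only [antitone_add_single_iff hμ, antitone_sub_single_iff hμ]
  rw [card_filter_first_occurrence_eq_card_image, card_filter_last_occurrence_eq_card_image]

end SingleStep

/-- On the graded graph of weakly decreasing integer vectors of length `d`,
the raising and lowering operators commute: for any weakly decreasing `μ, λ`, the number
of two-step up-down walks `μ → μ+eᵢ → μ+eᵢ−eⱼ = λ` (intermediate in `W̄_d`) equals the
number of two-step down-up walks `μ → μ−eⱼ → μ−eⱼ+eᵢ = λ`. -/
theorem stmt0 {d : ℕ} (μ lam : Fin d → ℤ) (hμ : Antitone μ) (hlam : Antitone lam) :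
    (Finset.univ.filter (fun p : Fin d × Fin d =>
        Antitone (μ + Pi.single p.1 1) ∧
        μ + Pi.single p.1 1 - Pi.single p.2 1 = lam)).card =
    (Finset.univ.filter (fun p : Fin d × Fin d =>
        Antitone (μ - Pi.single p.1 1) ∧
        μ - Pi.single p.1 1 + Pi.single p.2 1 = lam)).card := by
  by_cases hlam_eq : lam = μ
  · subst hlam_eq
    refine (card_filter_eq_of_iff_and_fst_eq_snd fun p => ?_).trans <|
      (card_addable_eq_card_removable hlam).trans
        (card_filter_eq_of_iff_and_fst_eq_snd fun p => ?_).symm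
    · rw [add_single_sub_single_eq_self_iff lam one_ne_zero]
    · rw [sub_single_add_single_eq_self_iff lam one_ne_zero]
  · refine card_equiv (Equiv.prodComm _ _) fun p => ?_
    simp only [mem_filter, mem_univ, true_and, Equiv.prodComm_apply, Prod.fst_swap,
      Prod.snd_swap, sub_add_eq_add_sub]
    exact (and_iff_right_of_imp
      (antitone_add_single_of_add_single_sub_single_eq hμ hlam hlam_eq)).trans
      (and_iff_right_of_imp (antitone_sub_single_of_add_single_sub_single_eq hμ hlam hlam_eq)).symm
end

section
/- For μ ≠ λ in W̄_d, the map sending the up-down walk μ ↗ μ+e_i ↘ μ+e_i−e_j = λ to the down-up walk μ ↘ μ−e_j ↗ μ−e_j+e_i = λ is a bijection between up-down walks and down-up walks from μ to λ in the graph of weakly decreasing integer vectors of length d. -/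
/-!
If `λ = μ + eᵢ - eⱼ` with `i ≠ j`, both intermediate vertices are forced by `μ` and `λ`:
`μ + eᵢ = μ ⊔ λ` and `μ - eⱼ = μ ⊓ λ`. A pointwise max or min of weakly decreasing vectors is
weakly decreasing, so each of the two walks exists as soon as the other one does.
-/

section PiSingleLattice

variable {ι G : Type*} [DecidableEq ι] [AddCommGroup G] [LinearOrder G] [IsOrderedAddMonoid G]
  {a : G} {i j : ι}

theorem sup_add_single_sub_single (ha : 0 ≤ a) (hij : i ≠ j) (f : ι → G) :
    f ⊔ (f + Pi.single i a - Pi.single j a) = f + Pi.single i a := by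
  funext k
  rcases eq_or_ne k i with rfl | hki
  · simpa [hij] using ha
  · rcases eq_or_ne k j with rfl | hkj
    · simpa [hki] using ha
    · simp [hki, hkj]

theorem inf_add_single_sub_single (ha : 0 ≤ a) (hij : i ≠ j) (f : ι → G) :
    f ⊓ (f + Pi.single i a - Pi.single j a) = f - Pi.single j a := by
  funext k
  rcases eq_or_ne k i with rfl | hki
  · simpa [hij] using ha
  · rcases eq_or_ne k j with rfl | hkj
    · simpa [hki] using ha
    · simp [hki, hkj]

end PiSingleLattice

/-- For `μ ≠ λ` weakly decreasing, the swap map `(i,j) ↦ (j,i)` is a bijection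
from up-down walks `μ ↗ μ+eᵢ ↘ μ+eᵢ−eⱼ = λ` to down-up walks `μ ↘ μ−eⱼ ↗ μ−eⱼ+eᵢ = λ`
in the graph of weakly decreasing integer vectors of length `d`. -/
theorem stmt1 {d : ℕ} (μ lam : Fin d → ℤ) (hμ : Antitone μ) (hlam : Antitone lam)
    (hne : μ ≠ lam) :
    Set.BijOn Prod.swap
      {p : Fin d × Fin d | Antitone (μ + Pi.single p.1 1) ∧
        μ + Pi.single p.1 1 - Pi.single p.2 1 = lam}
      {p : Fin d × Fin d | Antitone (μ - Pi.single p.1 1) ∧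
        μ - Pi.single p.1 1 + Pi.single p.2 1 = lam} := by
  refine ⟨?_, Prod.swap_injective.injOn, ?_⟩
  · rintro ⟨i, j⟩ ⟨-, hwalk : μ + Pi.single i 1 - Pi.single j 1 = lam⟩
    have hij : i ≠ j := by
      rintro rfl
      exact hne (by rw [← hwalk, add_sub_cancel_right])
    refine ⟨?_, by rwa [sub_add_eq_add_sub]⟩
    show Antitone (μ - Pi.single j 1)
    rw [← inf_add_single_sub_single zero_le_one hij μ, hwalk]
    exact hμ.inf hlam
  · rintro ⟨j, i⟩ ⟨-, hwalk : μ - Pi.single j 1 + Pi.single i 1 = lam⟩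
    have hij : i ≠ j := by
      rintro rfl
      exact hne (by rw [← hwalk, sub_add_cancel])
    rw [sub_add_eq_add_sub] at hwalk
    refine ⟨(i, j), ⟨?_, hwalk⟩, rfl⟩
    rw [← sup_add_single_sub_single zero_le_one hij μ, hwalk]
    exact hμ.sup hlam
end

section
/- Assuming the raising and lowering operators on W_d commute, the total number of N-step nearest-neighbor walks from μ to λ in W_d, where N = 2n + k with k = r(λ) − r(μ) ≥ 0, equals (2n+k choose n) times the number of walks from μ to λ following any fixed word W_n with n letters L and n+k letters R. -/
/-!
Let `R` and `L` be the operators on functions `W_d → ℕ` that sum over the up- and the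
down-neighbours of a point. Cutting a walk after its first step shows that the number of walks
from `μ` to `λ` following a word is the value at `μ` of the corresponding product of `R`s and
`L`s applied to the indicator of `λ`, and that the number of all `N`-step walks is the same for
`(R + L)^N`. The hypothesis says exactly that `R L = L R`. Hence every word with `n` letters `L`
and `n + k` letters `R` gives `R^(n+k) L^n`, and the binomial theorem expands `(R + L)^N`; since
each step changes the rank by `±1`, only the term with `n` down-steps contributes.
-/

/-- Nearest-neighbor adjacency on the Weyl lattice `W_d` of strictly decreasing
integer vectors. -/
def adjW (d : ℕ) (u v : Fin d → ℤ) : Prop :=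
  StrictAnti u ∧ StrictAnti v ∧
    ∃ i : Fin d, v = u + Pi.single i 1 ∨ v = u - Pi.single i 1

/-- The rank function on `W_d`: `r(λ) = Σ λᵢ − (d+1 choose 2)`. -/
def rankW (d : ℕ) (lam : Fin d → ℤ) : ℤ := (∑ i, lam i) - (d + 1).choose 2

/-- The number `Z_d(N; μ, λ)` of `N`-step nearest-neighbor walks from `μ` to `λ`
staying in `W_d`. -/
noncomputable def Zd (d N : ℕ) (μ lam : Fin d → ℤ) : ℕ :=
  Set.ncard {p : Fin (N + 1) → Fin d → ℤ |
    p 0 = μ ∧ p (Fin.last N) = lam ∧ ∀ k : Fin N, adjW d (p k.castSucc) (p k.succ)}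

/-- The number of walks from `μ` to `λ` in `W_d` whose up/down step pattern follows the
word `w : List Bool` (`true` = up-step `R`, `false` = down-step `L`). -/
noncomputable def Zword (d : ℕ) (w : List Bool) (μ lam : Fin d → ℤ) : ℕ :=
  Set.ncard {p : Fin (w.length + 1) → Fin d → ℤ |
    p 0 = μ ∧ p (Fin.last w.length) = lam ∧ (∀ k, StrictAnti (p k)) ∧
      ∀ k : Fin w.length, ∃ i : Fin d,
        if w.get k then p k.succ = p k.castSucc + Pi.single i 1
        else p k.succ = p k.castSucc - Pi.single i 1}

open Finset

section StepOperator

variable {X : Type*}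

def stepOp (S : X → Finset X) : Module.End ℕ (X → ℕ) where
  toFun g u := ∑ t ∈ S u, g t
  map_add' g h := funext fun _ => sum_add_distrib
  map_smul' c g := funext fun _ => by simp [mul_sum]

@[simp]
lemma stepOp_apply (S : X → Finset X) (g : X → ℕ) (u : X) :
    stepOp S g u = ∑ t ∈ S u, g t := rfl

lemma stepOp_union [DecidableEq X] {S S' : X → Finset X} (h : ∀ u, Disjoint (S u) (S' u)) :
    stepOp (fun u => S u ∪ S' u) = stepOp S + stepOp S' :=
  LinearMap.ext fun g => funext fun u => by simp [sum_union (h u)]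

lemma sum_sum_eq_sum_card_filter_mul [DecidableEq X] {A V : Finset X} {B : X → Finset X}
    (hV : ∀ t ∈ A, B t ⊆ V) (g : X → ℕ) :
    ∑ t ∈ A, ∑ s ∈ B t, g s = ∑ s ∈ V, #{t ∈ A | s ∈ B t} * g s := by
  simp_rw [card_eq_sum_ones, sum_mul, one_mul]
  refine sum_comm' fun t s => ?_
  rw [mem_filter]
  exact ⟨fun h => ⟨h, hV t h.1 h.2⟩, And.left⟩

lemma commute_stepOp [DecidableEq X] {S S' : X → Finset X}
    (h : ∀ u v, #{t ∈ S u | v ∈ S' t} = #{t ∈ S' u | v ∈ S t}) :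
    Commute (stepOp S) (stepOp S') := by
  refine LinearMap.ext fun g => funext fun u => ?_
  set V := (S u).biUnion S' ∪ (S' u).biUnion S
  change ∑ t ∈ S u, ∑ s ∈ S' t, g s = ∑ t ∈ S' u, ∑ s ∈ S t, g s
  rw [sum_sum_eq_sum_card_filter_mul (V := V)
      (fun t ht => subset_union_left.trans' (subset_biUnion_of_mem S' ht)) g,
    sum_sum_eq_sum_card_filter_mul (V := V)
      (fun t ht => subset_union_right.trans' (subset_biUnion_of_mem S ht)) g]
  simp_rw [h u]

lemma Commute.add_pow_apply {A B : Module.End ℕ (X → ℕ)} (h : Commute A B) (N : ℕ)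
    (g : X → ℕ) (u : X) :
    ((A + B) ^ N) g u = ∑ m ∈ range (N + 1), N.choose m * ((A ^ m * B ^ (N - m)) g) u := by
  rw [h.add_pow, LinearMap.sum_apply, Finset.sum_apply]
  refine sum_congr rfl fun m _ => ?_
  rw [← Nat.cast_comm, Module.End.mul_apply, Module.End.natCast_apply, Pi.smul_apply,
    smul_eq_mul]

lemma stepOp_pow_apply_ne_zero {S : X → Finset X} {r : X → ℤ} {c : ℤ}
    (hS : ∀ u, ∀ t ∈ S u, r t = r u + c) {g : X → ℕ} {x : ℤ} (hg : ∀ u, g u ≠ 0 → r u = x)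
    (m : ℕ) (u : X) (hu : (stepOp S ^ m) g u ≠ 0) : r u = x - m * c := by
  induction m generalizing u with
  | zero => simpa using hg u hu
  | succ m ih =>
    rw [pow_succ', Module.End.mul_apply, stepOp_apply] at hu
    obtain ⟨t, ht, hne⟩ := exists_ne_zero_of_sum_ne_zero hu
    have hrt := hS u t ht
    have hrt' := ih t hne
    push_cast
    linarith

end StepOperator

section Paths

variable {X : Type*}

def pathsAlong {N : ℕ} (S : Fin N → X → Finset X) (u v : X) : Set (Fin (N + 1) → X) :=
  {p | p 0 = u ∧ p (Fin.last N) = v ∧ ∀ k, p k.succ ∈ S k (p k.castSucc)}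

def pathsAlongSuccEquiv {N : ℕ} (S : Fin (N + 1) → X → Finset X) (u v : X) :
    pathsAlong S u v ≃ Σ t : S 0 u, pathsAlong (fun k => S k.succ) t v where
  toFun p := ⟨⟨p.1 1, by simpa [p.2.1] using p.2.2.2 0⟩, ⟨Fin.tail p.1, by
    refine ⟨by simp [Fin.tail], by simpa [Fin.tail] using p.2.2.1, fun k => ?_⟩
    simpa [Fin.tail, ← Fin.succ_castSucc] using p.2.2.2 k.succ⟩⟩
  invFun q := ⟨Fin.cons u q.2.1, by
    obtain ⟨⟨t, ht⟩, q, hq0, hqN, hq⟩ := q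
    refine ⟨rfl, by simpa [← Fin.succ_last] using hqN, fun k => ?_⟩
    cases k using Fin.cases with
    | zero => simpa [hq0] using ht
    | succ k => simpa [← Fin.succ_castSucc] using hq k⟩
  left_inv p := Subtype.ext (by simp only [← p.2.1, Fin.cons_self_tail])
  right_inv q := Sigma.subtype_ext (Subtype.ext (by simpa using q.2.2.1))
    (Fin.tail_cons (α := fun _ => X) u q.2.1)

lemma pathsAlong_finite {N : ℕ} (S : Fin N → X → Finset X) (u v : X) :
    (pathsAlong S u v).Finite := by
  induction N generalizing u with
  | zero =>
    refine (Set.finite_singleton fun _ => u).subset fun p hp => ?_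
    exact funext fun j => by rw [Fin.fin_one_eq_zero j]; exact hp.1
  | succ N ih =>
    have := fun t => (ih (fun k => S k.succ) t).to_subtype
    exact Set.finite_coe_iff.mp (Finite.of_equiv _ (pathsAlongSuccEquiv S u v).symm)

lemma ncard_pathsAlong [DecidableEq X] {N : ℕ} (S : Fin N → X → Finset X) (u v : X) :
    (pathsAlong S u v).ncard = ((List.ofFn fun k => stepOp (S k)).prod (Pi.single v 1)) u := by
  induction N generalizing u with
  | zero =>
    have hpaths : pathsAlong S u v = if u = v then {fun _ => u} else ∅ := by
      ext p
      simp only [pathsAlong, Fin.last_zero, IsEmpty.forall_iff, and_true]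
      split_ifs with h
      · subst h
        exact ⟨fun h => funext fun j => by rw [Fin.fin_one_eq_zero j]; exact h.1,
          by rintro rfl; simp⟩
      · simp only [Set.mem_empty_iff_false, iff_false]
        exact fun hp => h (hp.1 ▸ hp.2)
    rw [hpaths, List.ofFn_zero, List.prod_nil, Module.End.one_apply, Pi.single_apply]
    split_ifs <;> simp
  | succ N ih =>
    have := fun t => (pathsAlong_finite (fun k => S k.succ) t v).to_subtype
    rw [List.ofFn_succ, List.prod_cons, Module.End.mul_apply, stepOp_apply,
      ← Nat.card_coe_set_eq, Nat.card_congr (pathsAlongSuccEquiv S u v), Nat.card_sigma,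
      ← sum_coe_sort (S 0 u)]
    exact sum_congr rfl fun t _ => (Nat.card_coe_set_eq _).trans (ih _ t)

end Paths

section WeylChamber

variable {d : ℕ}

lemma rankW_add_single (u : Fin d → ℤ) (i : Fin d) :
    rankW d (u + Pi.single i 1) = rankW d u + 1 := by
  simp only [rankW, Pi.add_apply, sum_add_distrib, sum_pi_single', mem_univ, ↓reduceIte]
  ring

lemma rankW_sub_single (u : Fin d → ℤ) (i : Fin d) :
    rankW d (u - Pi.single i 1) = rankW d u - 1 := by
  simp only [rankW, Pi.sub_apply, sum_sub_distrib, sum_pi_single', mem_univ, ↓reduceIte]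
  ring

open Classical in
noncomputable def weylStep (d : ℕ) (b : Bool) (u : Fin d → ℤ) : Finset (Fin d → ℤ) :=
  if StrictAnti u then
    {t ∈ univ.image fun i => if b then u + Pi.single i 1 else u - Pi.single i 1 | StrictAnti t}
  else ∅

lemma mem_weylStep {b : Bool} {u t : Fin d → ℤ} :
    t ∈ weylStep d b u ↔ StrictAnti u ∧ StrictAnti t ∧
      ∃ i, if b then t = u + Pi.single i 1 else t = u - Pi.single i 1 := by
  unfold weylStep
  split_ifs with hu <;> cases b <;> simp [hu, eq_comm, and_comm]

lemma rankW_of_mem_weylStep {b : Bool} {u t : Fin d → ℤ} (h : t ∈ weylStep d b u) :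
    rankW d t = rankW d u + if b then 1 else -1 := by
  obtain ⟨-, -, i, hi⟩ := mem_weylStep.mp h
  cases b
  · simp only [Bool.false_eq_true, if_false] at hi
    rw [hi, rankW_sub_single, if_neg Bool.false_ne_true, sub_eq_add_neg]
  · simp only [if_true] at hi
    rw [hi, rankW_add_single, if_pos rfl]

lemma disjoint_weylStep (u : Fin d → ℤ) : Disjoint (weylStep d true u) (weylStep d false u) :=
  disjoint_left.mpr fun t ht ht' => by
    have := rankW_of_mem_weylStep ht
    have := rankW_of_mem_weylStep ht'
    simp only [if_true, if_false, Bool.false_eq_true] at *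
    omega

lemma adjW_iff_mem_weylStep_union {u t : Fin d → ℤ} :
    adjW d u t ↔ t ∈ weylStep d true u ∪ weylStep d false u := by
  simp [adjW, mem_weylStep, exists_or, and_or_left]

lemma mem_weylStep_iff_adjW {b : Bool} {u t : Fin d → ℤ} :
    t ∈ weylStep d b u ↔ adjW d u t ∧ rankW d t = rankW d u + if b then 1 else -1 := by
  refine ⟨fun h => ⟨adjW_iff_mem_weylStep_union.mpr ?_, rankW_of_mem_weylStep h⟩,
    fun ⟨hadj, hr⟩ => ?_⟩
  · cases b
    · exact mem_union_right _ h
    · exact mem_union_left _ h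
  · rcases mem_union.mp (adjW_iff_mem_weylStep_union.mp hadj) with h | h <;>
      have := rankW_of_mem_weylStep h <;> cases b <;> simp_all

end WeylChamber

section WalkCounts

variable {d : ℕ}

noncomputable def weylOp (d : ℕ) (b : Bool) : Module.End ℕ ((Fin d → ℤ) → ℕ) :=
  stepOp (weylStep d b)

lemma commute_weylOp_of_ncard_eq
    (hcomm : ∀ u v : Fin d → ℤ,
      {t | adjW d u t ∧ rankW d t = rankW d u + 1 ∧
           adjW d t v ∧ rankW d v = rankW d t - 1}.ncard =
      {t | adjW d u t ∧ rankW d t = rankW d u - 1 ∧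
           adjW d t v ∧ rankW d v = rankW d t + 1}.ncard) :
    Commute (weylOp d true) (weylOp d false) := by
  refine commute_stepOp fun u v => ?_
  rw [← Set.ncard_coe_finset, ← Set.ncard_coe_finset]
  convert hcomm u v using 2 <;> ext t <;>
    simp [mem_weylStep_iff_adjW, and_assoc, sub_eq_add_neg]

lemma commute_weylOp (hRL : Commute (weylOp d true) (weylOp d false)) (a b : Bool) :
    Commute (weylOp d a) (weylOp d b) := by
  cases a <;> cases b
  exacts [Commute.refl _, hRL.symm, hRL, Commute.refl _]

lemma Zd_eq_weylOp_pow (N : ℕ) (μ lam : Fin d → ℤ) :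
    Zd d N μ lam = ((weylOp d true + weylOp d false) ^ N) (Pi.single lam 1) μ := by
  have hpaths : Zd d N μ lam = (pathsAlong (fun _ : Fin N => fun u =>
      weylStep d true u ∪ weylStep d false u) μ lam).ncard := by
    unfold Zd pathsAlong
    simp only [adjW_iff_mem_weylStep_union]
  rw [hpaths, ncard_pathsAlong, List.ofFn_const, List.prod_replicate,
    stepOp_union disjoint_weylStep]
  rfl

lemma Zword_eq_weylOp_prod {μ : Fin d → ℤ} (hμ : StrictAnti μ) (w : List Bool)
    (lam : Fin d → ℤ) :
    Zword d w μ lam = ((w.map (weylOp d)).prod (Pi.single lam 1)) μ := by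
  have hpaths : Zword d w μ lam = (pathsAlong (fun k => weylStep d (w.get k)) μ lam).ncard := by
    unfold Zword
    congr 1
    ext p
    simp only [pathsAlong, mem_weylStep]
    constructor
    · rintro ⟨h0, hN, hanti, hstep⟩
      exact ⟨h0, hN, fun k => ⟨hanti _, hanti _, hstep k⟩⟩
    · rintro ⟨h0, hN, hstep⟩
      refine ⟨h0, hN, fun j => ?_, fun k => (hstep k).2.2⟩
      cases j using Fin.cases with
      | zero => exact h0 ▸ hμ
      | succ k => exact (hstep k).2.1
  rw [hpaths, ncard_pathsAlong]
  conv_rhs => rw [← List.ofFn_get w, List.map_ofFn]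
  rfl

lemma Zword_eq_weylOp_pow_mul_pow (hRL : Commute (weylOp d true) (weylOp d false))
    {μ : Fin d → ℤ} (hμ : StrictAnti μ) (w : List Bool) (lam : Fin d → ℤ) :
    Zword d w μ lam =
      ((weylOp d true ^ w.count true * weylOp d false ^ w.count false) (Pi.single lam 1)) μ := by
  have hperm : (w.map (weylOp d)).Perm ((List.replicate (w.count true) true ++
      List.replicate (w.count false) false).map (weylOp d)) :=
    (List.perm_iff_count.mpr fun b => by cases b <;> simp [List.count_replicate]).map _
  rw [Zword_eq_weylOp_prod hμ,
    hperm.prod_eq' (List.pairwise_map.mpr (List.pairwise_of_forall (commute_weylOp hRL)))]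
  simp [List.prod_replicate]

lemma rankW_sub_of_weylOp_apply_ne_zero {a b : ℕ} {μ lam : Fin d → ℤ}
    (h : ((weylOp d true ^ a * weylOp d false ^ b) (Pi.single lam 1)) μ ≠ 0) :
    rankW d lam - rankW d μ = a - b := by
  rw [Module.End.mul_apply] at h
  have hsingle (u) (hu : (Pi.single lam 1 : (Fin d → ℤ) → ℕ) u ≠ 0) : rankW d u = rankW d lam := by
    by_contra hne
    exact hu (Pi.single_eq_of_ne (fun hul => hne (congrArg _ hul)) _)
  have hlower := stepOp_pow_apply_ne_zero (S := weylStep d false) (c := -1)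
    (fun u t ht => by simpa using rankW_of_mem_weylStep ht) hsingle b
  have hraise := stepOp_pow_apply_ne_zero (S := weylStep d true) (c := 1)
    (fun u t ht => by simpa using rankW_of_mem_weylStep ht) hlower a μ h
  linarith

end WalkCounts

theorem stmt5_general {d : ℕ}
    (hcomm : ∀ u v : Fin d → ℤ,
      {t | adjW d u t ∧ rankW d t = rankW d u + 1 ∧
           adjW d t v ∧ rankW d v = rankW d t - 1}.ncard =
      {t | adjW d u t ∧ rankW d t = rankW d u - 1 ∧
           adjW d t v ∧ rankW d v = rankW d t + 1}.ncard)
    (μ lam : Fin d → ℤ) (hμ : StrictAnti μ)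
    (n k : ℕ) (hk : (k : ℤ) = rankW d lam - rankW d μ)
    (W : List Bool) (hWL : W.count false = n) (hWR : W.count true = n + k) :
    Zd d (2 * n + k) μ lam = (2 * n + k).choose n * Zword d W μ lam := by
  have hRL := commute_weylOp_of_ncard_eq hcomm
  rw [Zd_eq_weylOp_pow, hRL.add_pow_apply, Zword_eq_weylOp_pow_mul_pow hRL hμ, hWL, hWR,
    sum_eq_single_of_mem (n + k) (by simp; omega)]
  · rw [Nat.choose_symm_of_eq_add (by ring : 2 * n + k = (n + k) + n),
      show 2 * n + k - (n + k) = n by omega]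
  · intro m hm hne
    refine mul_eq_zero_of_right _ (by_contra fun h => hne ?_)
    have := rankW_sub_of_weylOp_apply_ne_zero h
    rw [mem_range] at hm
    omega

/-- assuming the raising and lowering operators on `W_d` commute, the total
number of `N`-step walks from `μ` to `λ`, `N = 2n + k` with `k = r(λ) − r(μ) ≥ 0`, equals
`(2n+k choose n)` times the number of walks following any fixed word with `n` letters `L`
and `n + k` letters `R`. -/
theorem stmt5 {d : ℕ}
    (hcomm : ∀ u v : Fin d → ℤ,
      {t | adjW d u t ∧ rankW d t = rankW d u + 1 ∧
           adjW d t v ∧ rankW d v = rankW d t - 1}.ncard =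
      {t | adjW d u t ∧ rankW d t = rankW d u - 1 ∧
           adjW d t v ∧ rankW d v = rankW d t + 1}.ncard)
    (μ lam : Fin d → ℤ) (hμ : StrictAnti μ) (hlam : StrictAnti lam)
    (n k : ℕ) (hk : (k : ℤ) = rankW d lam - rankW d μ)
    (W : List Bool) (hWL : W.count false = n) (hWR : W.count true = n + k) :
    Zd d (2 * n + k) μ lam = (2 * n + k).choose n * Zword d W μ lam :=
  stmt5_general hcomm μ lam hμ n k hk W hWL hWR
end

section
/- Let μ, λ ∈ W_d with k = r(λ) − r(μ) ≥ 0, and for each n ≥ 0 let W_n be any word with n letters L and n+k letters R. Then (assuming commutation of raising and lowering operators on W_d and the reflection-principle determinant formula) Σ_{n≥0} Z_d(W_n; μ, λ) x^{2n+k}/(n!(n+k)!) = det(I_{λ_i − μ_j}(2x))_{1≤i,j≤d}. -/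
/-- The modified Bessel function `I_k(2x)` of integer order `k`, as a formal power
series. -/
noncomputable def besselI (k : ℤ) : PowerSeries ℚ :=
  PowerSeries.mk fun N =>
    if 2 ∣ ((N : ℤ) - k) ∧ k ≤ (N : ℤ) ∧ -k ≤ (N : ℤ) then
      1 / ((Nat.factorial (((N : ℤ) - k) / 2).toNat) *
           (Nat.factorial (((N : ℤ) + k) / 2).toNat))
    else 0

/-!
Sorting the walks counted by `Z_d(N; μ, λ)` by their up/down pattern writes `Z_d(N; μ, λ)` as
the sum of `Z_d(W; μ, λ)` over all words `W` of length `N`. The commutation hypothesis says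
exactly that swapping two adjacent letters of a word does not change `Z_d(W; μ, λ)`, so this
count depends only on the numbers of letters `L` and `R`. Every step changes the rank by `±1`,
so only the `(2n+k choose n)` words with `n` letters `L` and `n + k` letters `R` contribute,
where `N = 2n + k`; dividing by `N!` turns the exponential generating function of
`Z_d(N; μ, λ)` into the series on the left.
-/

open Finset

section Paths

variable {α : Type*}

def pathSet {N : ℕ} (R : Fin N → α → α → Prop) (a b : α) : Set (Fin (N + 1) → α) :=
  {p | p 0 = a ∧ p (Fin.last N) = b ∧ ∀ k, R k (p k.castSucc) (p k.succ)}

theorem pathSet_zero_subsingleton (R : Fin 0 → α → α → Prop) (a b : α) :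
    (pathSet R a b).Subsingleton := by
  rintro p ⟨hp, -⟩ q ⟨hq, -⟩
  funext j
  rw [Fin.fin_one_eq_zero j, hp, hq]

theorem pathSet_succ {N : ℕ} (R : Fin (N + 1) → α → α → Prop) (a b : α) :
    pathSet R a b =
      ⋃ t ∈ {t | R 0 a t}, Fin.cons (α := fun _ => α) a '' pathSet (fun k => R k.succ) t b := by
  ext p
  simp only [Set.mem_iUnion, Set.mem_image, Set.mem_ofPred_eq, pathSet]
  constructor
  · rintro ⟨h0, hlast, hstep⟩
    refine ⟨p 1, by simpa [h0] using hstep 0, Fin.tail p, ⟨rfl, hlast, fun k => ?_⟩, ?_⟩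
    · simpa [Fin.tail, ← Fin.succ_castSucc] using hstep k.succ
    · rw [← h0, Fin.cons_self_tail]
  · rintro ⟨t, ht, q, ⟨hq0, hqlast, hqstep⟩, rfl⟩
    refine ⟨rfl, hqlast, Fin.cases (by simpa [hq0] using ht) fun k => ?_⟩
    simpa [← Fin.succ_castSucc] using hqstep k

theorem pathSet_finite {N : ℕ} {R : Fin N → α → α → Prop} (hR : ∀ k x, {y | R k x y}.Finite)
    (a b : α) : (pathSet R a b).Finite := by
  induction N generalizing a with
  | zero => exact (pathSet_zero_subsingleton R a b).finite
  | succ N ih =>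
    rw [pathSet_succ]
    exact (hR 0 a).biUnion fun t _ => (ih (fun k => hR k.succ) t).image _

theorem ncard_pathSet_succ {N : ℕ} {R : Fin (N + 1) → α → α → Prop}
    (hR : ∀ k x, {y | R k x y}.Finite) (a b : α) :
    (pathSet R a b).ncard = ∑ t ∈ (hR 0 a).toFinset, (pathSet (fun k => R k.succ) t b).ncard := by
  have hfin : ∀ t, (pathSet (fun k => R k.succ) t b).Finite :=
    fun t => pathSet_finite (fun k => hR k.succ) t b
  have hdisj : {t | R 0 a t}.PairwiseDisjoint
      fun t => Fin.cons (α := fun _ => α) a '' pathSet (fun k => R k.succ) t b := by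
    rintro t - u - htu
    refine Set.disjoint_left.2 ?_
    rintro _ ⟨q, hq, rfl⟩ ⟨r, hr, hqr⟩
    exact htu (hq.1.symm.trans ((congrFun hqr 1).symm.trans hr.1))
  rw [pathSet_succ, (hR 0 a).ncard_biUnion (fun t _ => (hfin t).image _) hdisj,
    finsum_mem_eq_finite_toFinset_sum _ (hR 0 a)]
  exact sum_congr rfl fun t _ => Set.ncard_image_of_injective _
    (Fin.cons_right_injective (α := fun _ => α) a)

theorem pathSet_exists_eq_iUnion {β : Type*} {N : ℕ} (S : β → α → α → Prop) (a b : α) :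
    pathSet (N := N) (fun _ x y => ∃ i, S i x y) a b =
      ⋃ c : Fin N → β, pathSet (fun k => S (c k)) a b := by
  ext p
  simp only [pathSet, Set.mem_iUnion, Set.mem_ofPred_eq]
  constructor
  · rintro ⟨h0, hlast, hstep⟩
    choose c hc using hstep
    exact ⟨c, h0, hlast, hc⟩
  · rintro ⟨c, h0, hlast, hc⟩
    exact ⟨h0, hlast, fun k => ⟨c k, hc k⟩⟩

theorem ncard_pathSet_exists {β : Type*} [Fintype β] {N : ℕ} {S : β → α → α → Prop}
    (hS : ∀ i x, {y | S i x y}.Finite) (hunique : ∀ i j x y, S i x y → S j x y → i = j)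
    (a b : α) :
    (pathSet (N := N) (fun _ x y => ∃ i, S i x y) a b).ncard =
      ∑ c : Fin N → β, (pathSet (fun k => S (c k)) a b).ncard := by
  have hdisj : Pairwise fun c c' : Fin N → β =>
      Disjoint (pathSet (fun k => S (c k)) a b) (pathSet (fun k => S (c' k)) a b) := by
    intro c c' hcc'
    refine Set.disjoint_left.2 fun p hp hp' => hcc' (funext fun k => ?_)
    exact hunique _ _ _ _ (hp.2.2 k) (hp'.2.2 k)
  rw [pathSet_exists_eq_iUnion, Set.ncard_iUnion_of_finite
    (s := fun c : Fin N → β => pathSet (fun k => S (c k)) a b)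
    (fun c => pathSet_finite (fun k => hS (c k)) a b) hdisj, finsum_eq_sum_of_fintype]

theorem ncard_pathSet_comp_cast {N M : ℕ} (h : N = M) (R : Fin M → α → α → Prop) (a b : α) :
    (pathSet (fun k => R (Fin.cast h k)) a b).ncard = (pathSet R a b).ncard := by
  subst h
  rfl

end Paths

theorem count_true_ofFn {N : ℕ} (c : Fin N → Bool) :
    (List.ofFn c).count true = #{k | c k = true} := by
  induction N with
  | zero => simp
  | succ N ih =>
    rw [List.ofFn_succ, List.count_cons, ih, card_filter, card_filter, Fin.sum_univ_succ]
    cases c 0 <;> simp [add_comm]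

theorem card_filter_count_true_ofFn (N a : ℕ) :
    #{c : Fin N → Bool | (List.ofFn c).count true = a} = N.choose a := by
  rw [show N.choose a = #(powersetCard a (univ : Finset (Fin N))) by simp]
  simp only [count_true_ofFn]
  refine card_nbij' (fun c => ({k | c k = true} : Finset (Fin N))) (fun s k => decide (k ∈ s))
    ?_ ?_ ?_ ?_
  · intro c hc
    simp_all
  · intro s hs
    simp_all
  · intro c _
    simp
  · intro s _
    ext
    simp

theorem sum_sum_eq_sum_card_filter_smul {β γ M : Type*} [DecidableEq γ] [AddCommMonoid M]
    {s : Finset β} {T : β → Finset γ} {U : Finset γ} (hU : ∀ x ∈ s, T x ⊆ U) (f : γ → M) :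
    ∑ x ∈ s, ∑ y ∈ T x, f y = ∑ y ∈ U, #{x ∈ s | y ∈ T x} • f y := by
  rw [sum_comm' (t' := U) (s' := fun y => {x ∈ s | y ∈ T x})]
  · simp only [sum_const]
  · intro x y
    simp only [mem_filter]
    exact ⟨fun h => ⟨h, hU x h.1 h.2⟩, fun h => h.1⟩

namespace WeylWalk

variable {d : ℕ}

def Step (d : ℕ) (b : Bool) (u v : Fin d → ℤ) : Prop :=
  StrictAnti u ∧ StrictAnti v ∧
    ∃ i : Fin d, if b then v = u + Pi.single i 1 else v = u - Pi.single i 1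

theorem finite_setOf_step (b : Bool) (u : Fin d → ℤ) : {v | Step d b u v}.Finite := by
  refine (Set.finite_range fun i => if b then u + Pi.single i 1 else u - Pi.single i 1).subset ?_
  rintro v ⟨-, -, i, hi⟩
  exact ⟨i, by cases b <;> simpa using hi.symm⟩

noncomputable def nbrs (b : Bool) (u : Fin d → ℤ) : Finset (Fin d → ℤ) :=
  (finite_setOf_step b u).toFinset

theorem mem_nbrs {b : Bool} {u v : Fin d → ℤ} : v ∈ nbrs b u ↔ Step d b u v :=
  Set.Finite.mem_toFinset _

theorem rankW_add_single (u : Fin d → ℤ) (i : Fin d) :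
    rankW d (u + Pi.single i 1) = rankW d u + 1 := by
  simp only [rankW, Pi.add_apply, sum_add_distrib, Finset.sum_pi_single', mem_univ, if_true]
  ring

theorem rankW_sub_single (u : Fin d → ℤ) (i : Fin d) :
    rankW d (u - Pi.single i 1) = rankW d u - 1 := by
  simp only [rankW, Pi.sub_apply, sum_sub_distrib, Finset.sum_pi_single', mem_univ, if_true]
  ring

theorem step_true_iff {u v : Fin d → ℤ} :
    Step d true u v ↔ adjW d u v ∧ rankW d v = rankW d u + 1 := by
  constructor
  · rintro ⟨hu, hv, i, rfl⟩
    exact ⟨⟨hu, hv, i, Or.inl rfl⟩, rankW_add_single u i⟩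
  · rintro ⟨⟨hu, hv, i, rfl | rfl⟩, hrank⟩
    · exact ⟨hu, hv, i, rfl⟩
    · rw [rankW_sub_single] at hrank
      omega

theorem step_false_iff {u v : Fin d → ℤ} :
    Step d false u v ↔ adjW d u v ∧ rankW d v = rankW d u - 1 := by
  constructor
  · rintro ⟨hu, hv, i, rfl⟩
    exact ⟨⟨hu, hv, i, Or.inr rfl⟩, rankW_sub_single u i⟩
  · rintro ⟨⟨hu, hv, i, rfl | rfl⟩, hrank⟩
    · rw [rankW_add_single] at hrank
      omega
    · exact ⟨hu, hv, i, rfl⟩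

theorem rankW_of_step {b : Bool} {u v : Fin d → ℤ} (h : Step d b u v) :
    rankW d v = rankW d u + if b then 1 else -1 := by
  cases b
  · simp [(step_false_iff.1 h).2, sub_eq_add_neg]
  · simp [(step_true_iff.1 h).2]

theorem eq_of_step_of_step {b b' : Bool} {u v : Fin d → ℤ} (h : Step d b u v)
    (h' : Step d b' u v) : b = b' := by
  have := (rankW_of_step h).symm.trans (rankW_of_step h')
  cases b <;> cases b' <;> simp_all

theorem adjW_iff_exists_step {u v : Fin d → ℤ} : adjW d u v ↔ ∃ b, Step d b u v := by
  constructor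
  · rintro ⟨hu, hv, i, h | h⟩
    exacts [⟨true, hu, hv, i, h⟩, ⟨false, hu, hv, i, h⟩]
  · rintro ⟨b, hu, hv, i, h⟩
    cases b
    exacts [⟨hu, hv, i, Or.inr h⟩, ⟨hu, hv, i, Or.inl h⟩]

theorem Zword_eq_ncard_pathSet {μ : Fin d → ℤ} (hμ : StrictAnti μ) (w : List Bool)
    (lam : Fin d → ℤ) :
    Zword d w μ lam = (pathSet (fun k => Step d (w.get k)) μ lam).ncard := by
  unfold Zword pathSet Step
  congr 1
  ext p
  simp only [Set.mem_ofPred_eq]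
  constructor
  · rintro ⟨h0, hlast, hanti, hstep⟩
    exact ⟨h0, hlast, fun k => ⟨hanti _, hanti _, hstep k⟩⟩
  · rintro ⟨h0, hlast, hstep⟩
    exact ⟨h0, hlast, Fin.cases (h0 ▸ hμ) fun k => (hstep k).2.1, fun k => (hstep k).2.2⟩

theorem Zword_eq_zero_of_not_strictAnti {μ : Fin d → ℤ} (hμ : ¬StrictAnti μ) (w : List Bool)
    (lam : Fin d → ℤ) : Zword d w μ lam = 0 := by
  unfold Zword
  convert Set.ncard_empty (Fin (w.length + 1) → Fin d → ℤ)
  exact Set.eq_empty_of_forall_notMem fun p ⟨h0, _, hanti, _⟩ => hμ (h0 ▸ hanti 0)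

theorem Zword_cons (b : Bool) (l : List Bool) (μ lam : Fin d → ℤ) :
    Zword d (b :: l) μ lam = ∑ t ∈ nbrs b μ, Zword d l t lam := by
  by_cases hμ : StrictAnti μ
  · rw [Zword_eq_ncard_pathSet hμ]
    refine (ncard_pathSet_succ (N := l.length) (fun _ => finite_setOf_step _) μ lam).trans
      (sum_congr rfl fun t ht => ?_)
    exact (Zword_eq_ncard_pathSet (mem_nbrs.1 ht).2.1 l lam).symm
  · have : nbrs b μ = ∅ := eq_empty_of_forall_notMem fun t ht => hμ (mem_nbrs.1 ht).1
    rw [Zword_eq_zero_of_not_strictAnti hμ, this, sum_empty]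

theorem rankW_eq_of_Zword_ne_zero {w : List Bool} {μ lam : Fin d → ℤ}
    (h : Zword d w μ lam ≠ 0) :
    rankW d lam = rankW d μ + w.count true - w.count false := by
  induction w generalizing μ with
  | nil =>
    obtain ⟨p, h0, hlast, -⟩ := Set.nonempty_of_ncard_ne_zero h
    simp [← h0, ← hlast, Fin.last]
  | cons b l ih =>
    rw [Zword_cons] at h
    obtain ⟨t, ht, hne⟩ := exists_ne_zero_of_sum_ne_zero h
    rw [ih hne, rankW_of_step (mem_nbrs.1 ht)]
    cases b <;> simp <;> ring

def RaiseLowerCommute (d : ℕ) : Prop :=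
  ∀ u v : Fin d → ℤ,
    {t | adjW d u t ∧ rankW d t = rankW d u + 1 ∧
         adjW d t v ∧ rankW d v = rankW d t - 1}.ncard =
    {t | adjW d u t ∧ rankW d t = rankW d u - 1 ∧
         adjW d t v ∧ rankW d v = rankW d t + 1}.ncard

theorem card_filter_nbrs_comm (hcomm : RaiseLowerCommute d) (x y : Bool) (μ u : Fin d → ℤ) :
    #{t ∈ nbrs x μ | u ∈ nbrs y t} = #{t ∈ nbrs y μ | u ∈ nbrs x t} := by
  have key : #{t ∈ nbrs true μ | u ∈ nbrs false t} = #{t ∈ nbrs false μ | u ∈ nbrs true t} := by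
    simpa only [← Set.ncard_coe_finset, coe_filter, mem_nbrs, step_true_iff, step_false_iff,
      and_assoc] using hcomm μ u
  cases x <;> cases y
  exacts [rfl, key.symm, key, rfl]

theorem Zword_swap (hcomm : RaiseLowerCommute d) (x y : Bool) (l : List Bool) (μ lam : Fin d → ℤ) :
    Zword d (x :: y :: l) μ lam = Zword d (y :: x :: l) μ lam := by
  set U := (nbrs x μ).biUnion (nbrs y) ∪ (nbrs y μ).biUnion (nbrs x)
  simp only [Zword_cons]
  rw [sum_sum_eq_sum_card_filter_smul (U := U) fun t ht => subset_biUnion_of_mem _ ht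
      |>.trans subset_union_left,
    sum_sum_eq_sum_card_filter_smul (U := U) fun t ht => subset_biUnion_of_mem _ ht
      |>.trans subset_union_right]
  exact sum_congr rfl fun u _ => by rw [card_filter_nbrs_comm hcomm]

theorem Zword_perm (hcomm : RaiseLowerCommute d) {w w' : List Bool} (h : w.Perm w') (μ lam : Fin d → ℤ) :
    Zword d w μ lam = Zword d w' μ lam := by
  induction h generalizing μ with
  | nil => rfl
  | cons b _ ih => simp only [Zword_cons, ih]
  | swap x y l => exact Zword_swap hcomm y x l μ lam
  | trans _ _ ih₁ ih₂ => exact (ih₁ μ).trans (ih₂ μ)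

theorem Zd_eq_sum_Zword {μ : Fin d → ℤ} (hμ : StrictAnti μ) (N : ℕ) (lam : Fin d → ℤ) :
    Zd d N μ lam = ∑ c : Fin N → Bool, Zword d (List.ofFn c) μ lam := by
  have hZd : Zd d N μ lam = (pathSet (N := N) (fun _ u v => ∃ b, Step d b u v) μ lam).ncard := by
    simp only [Zd, pathSet, adjW_iff_exists_step]
  rw [hZd, ncard_pathSet_exists (fun _ => finite_setOf_step _)
    (fun _ _ _ _ => eq_of_step_of_step)]
  refine sum_congr rfl fun c _ => ?_
  rw [Zword_eq_ncard_pathSet hμ, ← ncard_pathSet_comp_cast (List.length_ofFn (f := c))]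
  simp only [List.get_ofFn]

theorem count_true_eq_of_Zword_ne_zero {w : List Bool} {μ lam : Fin d → ℤ} {k : ℕ}
    (hk : (k : ℤ) = rankW d lam - rankW d μ) (h : Zword d w μ lam ≠ 0) :
    w.count true = w.count false + k := by
  have := rankW_eq_of_Zword_ne_zero h
  omega

theorem Zd_eq_zero {μ lam : Fin d → ℤ} (hμ : StrictAnti μ) {k N : ℕ}
    (hk : (k : ℤ) = rankW d lam - rankW d μ) (hN : ¬(k ≤ N ∧ 2 ∣ N - k)) :
    Zd d N μ lam = 0 := by
  rw [Zd_eq_sum_Zword hμ]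
  refine sum_eq_zero fun c _ => by_contra fun h => hN ?_
  have hcount := count_true_eq_of_Zword_ne_zero hk h
  have hlen := (List.ofFn c).count_true_add_count_false
  rw [List.length_ofFn] at hlen
  omega

theorem Zd_two_mul_add_eq_choose_mul {μ lam : Fin d → ℤ} (hμ : StrictAnti μ) {k : ℕ}
    (hk : (k : ℤ) = rankW d lam - rankW d μ) (hcomm : RaiseLowerCommute d) {n : ℕ}
    {w : List Bool} (hL : w.count false = n) (hR : w.count true = n + k) :
    Zd d (2 * n + k) μ lam = (2 * n + k).choose (n + k) * Zword d w μ lam := by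
  have hterm : ∀ c : Fin (2 * n + k) → Bool, Zword d (List.ofFn c) μ lam =
      if (List.ofFn c).count true = n + k then Zword d w μ lam else 0 := by
    intro c
    have hlen := (List.ofFn c).count_true_add_count_false
    rw [List.length_ofFn] at hlen
    split_ifs with hc
    · refine Zword_perm hcomm (List.perm_iff_count.2 fun b => ?_) μ lam
      cases b
      · rw [hL]
        omega
      · rw [hR, hc]
    · by_contra h
      exact hc (by have := count_true_eq_of_Zword_ne_zero hk h; omega)
  rw [Zd_eq_sum_Zword hμ, sum_congr rfl fun c _ => hterm c, ← sum_filter, sum_const,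
    card_filter_count_true_ofFn, smul_eq_mul]

end WeylWalk

theorem stmt12_general {d : ℕ} (μ lam : Fin d → ℤ) (hμ : StrictAnti μ)
    (k : ℕ) (hk : (k : ℤ) = rankW d lam - rankW d μ)
    (W : ℕ → List Bool)
    (hWL : ∀ n, (W n).count false = n) (hWR : ∀ n, (W n).count true = n + k)
    (hcomm : ∀ u v : Fin d → ℤ,
      {t | adjW d u t ∧ rankW d t = rankW d u + 1 ∧
           adjW d t v ∧ rankW d v = rankW d t - 1}.ncard =
      {t | adjW d u t ∧ rankW d t = rankW d u - 1 ∧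
           adjW d t v ∧ rankW d v = rankW d t + 1}.ncard)
    (hdet : (PowerSeries.mk fun N => (Zd d N μ lam : ℚ) / N.factorial) =
      Matrix.det (Matrix.of fun i j : Fin d => besselI (lam i - μ j))) :
    (PowerSeries.mk fun N =>
      if k ≤ N ∧ 2 ∣ (N - k) then
        (Zword d (W ((N - k) / 2)) μ lam : ℚ) /
          (((N - k) / 2).factorial * ((N - k) / 2 + k).factorial)
      else 0) =
    Matrix.det (Matrix.of fun i j : Fin d => besselI (lam i - μ j)) := by
  rw [← hdet]
  ext N
  simp only [PowerSeries.coeff_mk]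
  split_ifs with hN
  · obtain ⟨n, rfl⟩ : ∃ n, N = 2 * n + k := ⟨(N - k) / 2, by omega⟩
    rw [show (2 * n + k - k) / 2 = n by omega,
      WeylWalk.Zd_two_mul_add_eq_choose_mul hμ hk hcomm (hWL n) (hWR n), Nat.cast_mul,
      Nat.cast_choose ℚ (by omega), show 2 * n + k - (n + k) = n by omega]
    field_simp
  · rw [WeylWalk.Zd_eq_zero hμ hk hN, Nat.cast_zero, zero_div]

/-- let `μ, λ ∈ W_d` with `k = r(λ) − r(μ) ≥ 0`, and for each `n ≥ 0` let
`W n` be any word with `n` letters `L` and `n + k` letters `R`.  Assuming the commutation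
of raising and lowering operators on `W_d` and the reflection-principle determinant
formula, `Σ_{n ≥ 0} Z_d(W_n; μ, λ) x^{2n+k}/(n!(n+k)!) = det(I_{λᵢ−μⱼ}(2x))`. -/
theorem stmt12 {d : ℕ} (μ lam : Fin d → ℤ) (hμ : StrictAnti μ) (hlam : StrictAnti lam)
    (k : ℕ) (hk : (k : ℤ) = rankW d lam - rankW d μ)
    (W : ℕ → List Bool)
    (hWL : ∀ n, (W n).count false = n) (hWR : ∀ n, (W n).count true = n + k)
    (hcomm : ∀ u v : Fin d → ℤ,
      {t | adjW d u t ∧ rankW d t = rankW d u + 1 ∧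
           adjW d t v ∧ rankW d v = rankW d t - 1}.ncard =
      {t | adjW d u t ∧ rankW d t = rankW d u - 1 ∧
           adjW d t v ∧ rankW d v = rankW d t + 1}.ncard)
    (hdet : (PowerSeries.mk fun N => (Zd d N μ lam : ℚ) / N.factorial) =
      Matrix.det (Matrix.of fun i j : Fin d => besselI (lam i - μ j))) :
    (PowerSeries.mk fun N =>
      if k ≤ N ∧ 2 ∣ (N - k) then
        (Zword d (W ((N - k) / 2)) μ lam : ℚ) /
          (((N - k) / 2).factorial * ((N - k) / 2 + k).factorial)
      else 0) =
    Matrix.det (Matrix.of fun i j : Fin d => besselI (lam i - μ j)) :=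
  stmt12_general μ lam hμ k hk W hWL hWR hcomm hdet
end
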